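/- arXiv:2404.15434 — 3 statements merged into one kernel-verified Lean document; each statement's English description precedes it below -/
import Mathlib

section
/- Let η ∈ ℝ ∖ {0} and t > 0. Then μ₁({𝒜 ∈ 𝔄(M,A) : |F_η(𝒜)| ≥ t}) ≤ 2 exp(−A t² / 16). -/
open MeasureTheory Finset Filter Topology

namespace FUPRandom

/-- The space of alphabets of cardinality `A` from digits `{0, ..., M-1}`. -/
def Alphabet (M A : ℕ) : Type := {s : Finset (Fin M) // s.card = A}

instance (M A : ℕ) : Fintype (Alphabet M A) := by unfold Alphabet; infer_instance
instance (M A : ℕ) : DecidableEq (Alphabet M A) := by unfold Alphabet; infer_instance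
instance (M A : ℕ) : MeasurableSpace (Alphabet M A) := ⊤

/-- The uniform (counting) probability measure on a finite type. -/
noncomputable def uniformMeasure (α : Type*) [Fintype α] [MeasurableSpace α] : Measure α :=
  (Fintype.card α : ENNReal)⁻¹ • Measure.count

/-- `F_η(𝒜) = (1/A) ∑_{a ∈ 𝒜} e^{-iηa} - (1/M) ∑_{a=0}^{M-1} e^{-iηa}`. -/
noncomputable def Feta (M A : ℕ) (η : ℝ) (𝒜 : Alphabet M A) : ℂ :=
  (A : ℂ)⁻¹ * ∑ a ∈ 𝒜.val, Complex.exp (-(Complex.I * η * (a : ℕ)))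
    - (M : ℂ)⁻¹ * ∑ a ∈ Finset.range M, Complex.exp (-(Complex.I * η * a))

/-- A configuration: for each level `j` (counted from `0`, corresponding to the
`(j+1)`-st iteration of the construction), an alphabet for each of the `A ^ j`
points of the previous level, indexed via `finFunctionFinEquiv`. -/
def Config (M A : ℕ) : Type := (j : ℕ) → (Fin (A ^ j) → Alphabet M A)

instance (M A : ℕ) : MeasurableSpace (Config M A) := by unfold Config; infer_instance

/-- The `k`-th smallest digit of an alphabet, as a natural number. -/
def digit {M A : ℕ} (𝒜 : Alphabet M A) (k : Fin A) : ℕ :=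
  ((𝒜.val.orderIsoOfFin 𝒜.prop k : Fin M) : ℕ)

/-- The point of `B_j` indexed by a word `w : Fin j → Fin A`, for a given
configuration `ω`. -/
noncomputable def cantorPoint (M A : ℕ) (ω : Config M A) : (j : ℕ) → (Fin j → Fin A) → ℝ
  | 0, _ => 0
  | (j + 1), w =>
      cantorPoint M A ω j (fun i => w i.castSucc)
        + (digit (ω j (finFunctionFinEquiv (fun i => w i.castSucc))) (w (Fin.last j)) : ℝ)
          / (M : ℝ) ^ (j + 1)

/-- The `j`-th iteration `𝒞_j` of the Cantor set: a union of `A ^ j` closed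
intervals of length `M ^ (-j)`. -/
noncomputable def cantorIter (M A : ℕ) (ω : Config M A) (j : ℕ) : Set ℝ :=
  ⋃ w : Fin j → Fin A,
    Set.Icc (cantorPoint M A ω j w) (cantorPoint M A ω j w + ((M : ℝ) ^ j)⁻¹)

/-- The Cantor set `𝒞 = ⋂_{j ≥ 1} 𝒞_j`. -/
noncomputable def cantorSet (M A : ℕ) (ω : Config M A) : Set ℝ :=
  ⋂ j ∈ {j : ℕ | 1 ≤ j}, cantorIter M A ω j

/-- The measure `ν_j`, with density `(M/A)^j 1_{𝒞_j}` w.r.t. Lebesgue measure. -/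
noncomputable def cantorMeasureIter (M A : ℕ) (ω : Config M A) (j : ℕ) : Measure ℝ :=
  ((M : ENNReal) ^ j / (A : ENNReal) ^ j) • (volume.restrict (cantorIter M A ω j))

/-- `ν` is the weak limit of the measures `ν_j`. -/
def IsCantorMeasure (M A : ℕ) (ω : Config M A) (ν : Measure ℝ) : Prop :=
  ∀ f : BoundedContinuousFunction ℝ ℝ,
    Tendsto (fun j => ∫ x, f x ∂(cantorMeasureIter M A ω j)) atTop (𝓝 (∫ x, f x ∂ν))

/-- `μ^∞` is the product of the uniform probability measures: a probability
measure on the configuration space whose coordinates are independent and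
uniformly distributed. -/
def IsProductUniform (M A : ℕ) (P : Measure (Config M A)) : Prop :=
  IsProbabilityMeasure P ∧
    ProbabilityTheory.iIndepFun (fun j ω => ω j) P ∧
    ∀ j : ℕ, P.map (fun ω => ω j) = uniformMeasure (Fin (A ^ j) → Alphabet M A)

/-- The Fourier transform `ℱν(ξ) = (2π)^{-1/2} ∫ e^{-ixξ} dν(x)` of a measure. -/
noncomputable def fourierMeasure (ν : Measure ℝ) (ξ : ℝ) : ℂ :=
  (Real.sqrt (2 * Real.pi) : ℂ)⁻¹ * ∫ x, Complex.exp (-(Complex.I * x * ξ)) ∂ν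

/-- The Fourier transform `ℱu(ξ) = (2π)^{-1/2} ∫ e^{-ixξ} u(x) dx` of a function. -/
noncomputable def fourierFn (u : ℝ → ℂ) (ξ : ℝ) : ℂ :=
  (Real.sqrt (2 * Real.pi) : ℂ)⁻¹ * ∫ x : ℝ, Complex.exp (-(Complex.I * x * ξ)) * u x

/-- The semiclassical Fourier transform
`ℱ_h u(ξ) = (2πh)^{-1/2} ∫ e^{-ixξ/h} u(x) dx`. -/
noncomputable def semiclassicalFourier (h : ℝ) (u : ℝ → ℂ) (ξ : ℝ) : ℂ :=
  (Real.sqrt (2 * Real.pi * h) : ℂ)⁻¹ * ∫ x : ℝ, Complex.exp (-(Complex.I * x * ξ / h)) * u x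

/-!
Since `#𝒜 = A`, `F_η(𝒜) = A⁻¹ ∑_{a ∈ 𝒜} (e^{-iηa} - 𝔼_b e^{-iηb})`, and `t ≤ |F_η(𝒜)|` forces one
of `± Re F_η(𝒜)`, `± Im F_η(𝒜)` to be at least `t / 2`. Each of these is the centred mean of `A`
values in `[-1, 1]` drawn without replacement, so Hoeffding's inequality bounds its tail by
`exp(-A t² / 8)`: the Chernoff bound only needs `𝔼 ∏_{a ∈ 𝒜} x_a ≤ (𝔼_b x_b)^A` for
`x = exp(λ f) ≥ 0`, which is Maclaurin's inequality `e_A(x) / C(M, A) ≤ (e_1(x) / M)^A`, after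
which Hoeffding's lemma bounds `𝔼_b x_b`. With `e = exp(-A t² / 16)` the four tails add up to
`4 e²`, and `min (1, 4 e²) ≤ 2 e`.
-/

open BigOperators ProbabilityTheory

section Maclaurin

variable {ι : Type*}

lemma sum_sum_sub_mul_self_nonneg (x : ι → ℝ) (V : Finset ι) :
    0 ≤ ∑ a ∈ V, (∑ b ∈ V, (x a - x b)) * x a := by
  simp_rw [sum_mul]
  have hswap : ∑ a ∈ V, ∑ b ∈ V, (x a - x b) * x a = ∑ a ∈ V, ∑ b ∈ V, (x b - x a) * x b :=
    sum_comm
  have hsq : 2 * ∑ a ∈ V, ∑ b ∈ V, (x a - x b) * x a = ∑ a ∈ V, ∑ b ∈ V, (x a - x b) ^ 2 := by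
    rw [two_mul]
    nth_rewrite 2 [hswap]
    simp_rw [← sum_add_distrib]
    exact sum_congr rfl fun a _ => sum_congr rfl fun b _ => by ring
  have : 0 ≤ ∑ a ∈ V, ∑ b ∈ V, (x a - x b) ^ 2 := by positivity
  linarith

variable [Fintype ι] [DecidableEq ι]

lemma sum_powersetCard_sum_compl {β : Type*} [AddCommMonoid β] (g : Finset ι → ι → β) (k : ℕ) :
    ∑ S ∈ powersetCard k univ, ∑ b ∈ Sᶜ, g S b
      = ∑ T ∈ powersetCard (k + 1) univ, ∑ b ∈ T, g (T.erase b) b := by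
  rw [sum_sigma', sum_sigma']
  refine sum_nbij' (fun p => ⟨insert p.2 p.1, p.2⟩) (fun p => ⟨p.1.erase p.2, p.2⟩)
    ?_ ?_ ?_ ?_ ?_ <;> rintro ⟨S, b⟩ hp <;>
    simp only [mem_sigma, mem_powersetCard_univ, mem_compl] at hp
  · simp [card_insert_of_notMem hp.2, hp.1]
  · simp [card_erase_of_mem hp.2, hp.1]
  · simp [erase_insert hp.2]
  · simp [insert_erase hp.2]
  · simp [erase_insert hp.2]

variable (x : ι → ℝ)

lemma sum_powersetCard_sum_compl_mul_prod (k : ℕ) :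
    ∑ S ∈ powersetCard k univ, (∑ b ∈ Sᶜ, x b) * ∏ a ∈ S, x a
      = (k + 1) * ∑ T ∈ powersetCard (k + 1) univ, ∏ a ∈ T, x a := by
  simp_rw [sum_mul, sum_powersetCard_sum_compl (fun S b => x b * ∏ a ∈ S, x a), mul_sum]
  refine sum_congr rfl fun T hT => ?_
  rw [sum_congr rfl fun b hb => mul_prod_erase T x hb, sum_const, mem_powersetCard_univ.1 hT,
    nsmul_eq_mul]
  push_cast; ring

lemma sum_powersetCard_sum_sum_sub_mul_prod_nonneg (hx : 0 ≤ x) (k : ℕ) :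
    0 ≤ ∑ S ∈ powersetCard k univ, (∑ a ∈ S, ∑ b ∈ Sᶜ, (x a - x b)) * ∏ a ∈ S, x a := by
  rcases k with _ | k
  · simp
  -- Grouping the pairs `a ∈ S`, `b ∉ S` by `R = S \ {a}`, each `R` contributes
  -- `(∏_R x) * ∑_{a, b ∉ R} (x a - x b) * x a ≥ 0`.
  set G : Finset ι → ι → ℝ := fun R a => (∑ b ∈ Rᶜ, (x a - x b)) * x a * ∏ c ∈ R, x c
  have hterm : ∀ S ∈ powersetCard (k + 1) univ,
      (∑ a ∈ S, ∑ b ∈ Sᶜ, (x a - x b)) * ∏ a ∈ S, x a = ∑ a ∈ S, G (S.erase a) a := by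
    intro S _
    rw [sum_mul]
    refine sum_congr rfl fun a ha => ?_
    simp only [G]
    rw [compl_erase, sum_insert (by simp [ha]), sub_self, zero_add, mul_assoc,
      mul_prod_erase S x ha]
  rw [sum_congr rfl hterm, ← sum_powersetCard_sum_compl G k]
  refine sum_nonneg fun R _ => ?_
  simp only [G, ← sum_mul]
  exact mul_nonneg (sum_sum_sub_mul_self_nonneg x Rᶜ) (prod_nonneg fun c _ => hx c)

lemma sum_sum_compl_sub_eq (S : Finset ι) :
    ∑ a ∈ S, ∑ b ∈ Sᶜ, (x a - x b)
      = (Fintype.card ι - #S) * ∑ a ∈ S, x a - #S * ∑ b ∈ Sᶜ, x b := by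
  simp only [sum_sub_distrib, sum_const, card_compl, nsmul_eq_mul]
  rw [Nat.cast_sub (card_le_univ S), ← mul_sum]

lemma card_mul_succ_mul_sum_powersetCard_succ_le (hx : 0 ≤ x) (k : ℕ) :
    Fintype.card ι * (k + 1) * ∑ T ∈ powersetCard (k + 1) univ, ∏ a ∈ T, x a
      ≤ (Fintype.card ι - k) * (∑ a, x a) * ∑ S ∈ powersetCard k univ, ∏ a ∈ S, x a := by
  set n : ℝ := (Fintype.card ι : ℝ)
  set sumIn := ∑ S ∈ powersetCard k univ, (∑ a ∈ S, x a) * ∏ a ∈ S, x a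
  set sumOut := ∑ S ∈ powersetCard k univ, (∑ b ∈ Sᶜ, x b) * ∏ a ∈ S, x a
  have hsplit : (∑ a, x a) * ∑ S ∈ powersetCard k univ, ∏ a ∈ S, x a = sumIn + sumOut := by
    rw [mul_sum, ← sum_add_distrib]
    exact sum_congr rfl fun S _ => by rw [← add_mul, sum_add_sum_compl]
  have hpair : ∑ S ∈ powersetCard k univ, (∑ a ∈ S, ∑ b ∈ Sᶜ, (x a - x b)) * ∏ a ∈ S, x a
      = (n - k) * sumIn - k * sumOut := by
    rw [mul_sum, mul_sum, ← sum_sub_distrib]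
    refine sum_congr rfl fun S hS => ?_
    rw [sum_sum_compl_sub_eq, (mem_powersetCard_univ.1 hS)]
    ring
  have hnonneg := sum_powersetCard_sum_sum_sub_mul_prod_nonneg x hx k
  rw [hpair] at hnonneg
  rw [mul_assoc _ (∑ a, x a), hsplit, mul_assoc, ← sum_powersetCard_sum_compl_mul_prod]
  linarith

theorem sum_powersetCard_prod_le_choose_mul_expect_pow (hx : 0 ≤ x) (k : ℕ) :
    ∑ S ∈ powersetCard k univ, ∏ a ∈ S, x a ≤ (Fintype.card ι).choose k * (𝔼 a, x a) ^ k := by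
  induction k with
  | zero => simp
  | succ k ih =>
    set n := Fintype.card ι
    rcases le_or_gt n k with hnk | hkn
    · rw [powersetCard_eq_empty.2 (by simpa using hnk.trans_lt k.lt_succ_self), sum_empty]
      have : 0 ≤ 𝔼 a, x a := expect_nonneg fun a _ => hx a
      positivity
    have hn : (0 : ℝ) < n := by exact_mod_cast (Nat.zero_le k).trans_lt hkn
    have hchoose : ((n : ℝ) - k) * n.choose k = (k + 1) * n.choose (k + 1) := by
      have h := congrArg (Nat.cast : ℕ → ℝ) (Nat.choose_succ_right_eq n k)
      push_cast [Nat.cast_sub hkn.le] at h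
      linarith
    have hmean : (∑ a, x a) = n * 𝔼 a, x a := by
      rw [Fintype.expect_eq_sum_div_card, mul_div_cancel₀ _ hn.ne']
    refine le_of_mul_le_mul_left ?_ (by positivity : (0 : ℝ) < n * (k + 1))
    calc (n : ℝ) * (k + 1) * ∑ T ∈ powersetCard (k + 1) univ, ∏ a ∈ T, x a
        ≤ (n - k) * (∑ a, x a) * ∑ S ∈ powersetCard k univ, ∏ a ∈ S, x a :=
          card_mul_succ_mul_sum_powersetCard_succ_le x hx k
      _ ≤ (n - k) * (∑ a, x a) * (n.choose k * (𝔼 a, x a) ^ k) := by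
          have : (k : ℝ) ≤ n := by exact_mod_cast hkn.le
          gcongr
          exact mul_nonneg (by linarith) (sum_nonneg fun a _ => hx a)
      _ = n * (k + 1) * (n.choose (k + 1) * (𝔼 a, x a) ^ (k + 1)) := by
          rw [hmean, pow_succ]
          linear_combination (n * (𝔼 a, x a) ^ (k + 1)) * hchoose

end Maclaurin

section Hoeffding

variable {ι : Type*} [Fintype ι]

lemma integral_uniformOn_univ [MeasurableSpace ι] [MeasurableSingletonClass ι] (g : ι → ℝ) :
    ∫ i, g i ∂(uniformOn (Set.univ : Set ι)) = 𝔼 i, g i := by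
  rw [integral_fintype (.of_finite), Fintype.expect_eq_sum_div_card, sum_div]
  refine sum_congr rfl fun i _ => ?_
  simp [measureReal_def, uniformOn_univ, div_eq_inv_mul]

lemma expect_exp_mul_sub_expect_le [Nonempty ι] {f : ι → ℝ} {a b : ℝ}
    (hf : ∀ i, f i ∈ Set.Icc a b) (t : ℝ) :
    𝔼 i, Real.exp (t * (f i - 𝔼 j, f j)) ≤ Real.exp ((b - a) ^ 2 * t ^ 2 / 8) := by
  let _ : MeasurableSpace ι := ⊤
  have _ : MeasurableSingletonClass ι := ⟨fun _ => trivial⟩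
  have h := (hasSubgaussianMGF_of_mem_Icc (μ := uniformOn Set.univ) (X := f)
    (.of_discrete) (.of_forall hf)).mgf_le t
  simp only [mgf, integral_uniformOn_univ] at h
  convert h using 2
  push_cast [coe_nnnorm, Real.norm_eq_abs, div_pow, sq_abs]
  ring

variable [DecidableEq ι] [Nonempty ι] {f : ι → ℝ} {a b : ℝ}

lemma card_filter_powersetCard_mul_exp_le (hf : ∀ i, f i ∈ Set.Icc a b) (k : ℕ) (s : ℝ)
    {t : ℝ} (ht : 0 ≤ t) :
    #{S ∈ powersetCard k univ | k * s ≤ ∑ i ∈ S, (f i - 𝔼 j, f j)} * Real.exp (t * (k * s))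
      ≤ (Fintype.card ι).choose k * Real.exp ((b - a) ^ 2 * t ^ 2 / 8) ^ k := by
  set x : ι → ℝ := fun i => Real.exp (t * (f i - 𝔼 j, f j))
  have hx : 0 ≤ x := fun i => (Real.exp_pos _).le
  calc (#{S ∈ powersetCard k univ | k * s ≤ ∑ i ∈ S, (f i - 𝔼 j, f j)} : ℝ)
        * Real.exp (t * (k * s))
      = ∑ S ∈ powersetCard k univ with k * s ≤ ∑ i ∈ S, (f i - 𝔼 j, f j),
          Real.exp (t * (k * s)) := by rw [sum_const, nsmul_eq_mul]
    _ ≤ ∑ S ∈ powersetCard k univ with k * s ≤ ∑ i ∈ S, (f i - 𝔼 j, f j), ∏ i ∈ S, x i := by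
        refine sum_le_sum fun S hS => ?_
        rw [← Real.exp_sum, ← mul_sum]
        exact Real.exp_le_exp.2 (mul_le_mul_of_nonneg_left (mem_filter.1 hS).2 ht)
    _ ≤ ∑ S ∈ powersetCard k univ, ∏ i ∈ S, x i :=
        sum_le_sum_of_subset_of_nonneg (filter_subset _ _) fun S _ _ => prod_nonneg fun i _ => hx i
    _ ≤ (Fintype.card ι).choose k * (𝔼 i, x i) ^ k :=
        sum_powersetCard_prod_le_choose_mul_expect_pow x hx k
    _ ≤ (Fintype.card ι).choose k * Real.exp ((b - a) ^ 2 * t ^ 2 / 8) ^ k := by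
        gcongr
        exact expect_exp_mul_sub_expect_le hf t

theorem hoeffding_card_powersetCard (hf : ∀ i, f i ∈ Set.Icc a b) (hab : a < b) (k : ℕ)
    {s : ℝ} (hs : 0 ≤ s) :
    #{S ∈ powersetCard k univ | k * s ≤ ∑ i ∈ S, (f i - 𝔼 j, f j)}
      ≤ (Fintype.card ι).choose k * Real.exp (-(2 * k * s ^ 2 / (b - a) ^ 2)) := by
  have hd : 0 < (b - a) ^ 2 := by nlinarith
  have h := card_filter_powersetCard_mul_exp_le hf k s (t := 4 * s / (b - a) ^ 2) (by positivity)
  rw [← le_div_iff₀ (Real.exp_pos _), mul_div_assoc, ← Real.exp_nat_mul, ← Real.exp_sub] at h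
  refine h.trans_eq (congrArg (_ * Real.exp ·) ?_)
  field_simp
  ring

end Hoeffding

lemma uniformMeasure_apply {α : Type*} [Fintype α] [MeasurableSpace α]
    [MeasurableSingletonClass α] (p : α → Prop) [DecidablePred p] :
    uniformMeasure α {x | p x} = #{x | p x} / Fintype.card α := by
  rw [uniformMeasure, Measure.smul_apply, smul_eq_mul, ← coe_filter_univ,
    Measure.count_apply_finset, ENNReal.div_eq_inv_mul]

instance (M A : ℕ) : MeasurableSingletonClass (Alphabet M A) :=
  ⟨fun _ => MeasurableSpace.measurableSet_top⟩

lemma card_alphabet (M A : ℕ) : Fintype.card (Alphabet M A) = M.choose A := by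
  have := Fintype.card_finset_len (α := Fin M) A
  rwa [Fintype.card_fin] at this

lemma card_filter_alphabet {M A : ℕ} (P : Finset (Fin M) → Prop) [DecidablePred P] :
    #{𝒜 : Alphabet M A | P 𝒜.val} = #{S ∈ powersetCard A univ | P S} := by
  refine card_bij (fun 𝒜 _ => 𝒜.val) ?_ (fun _ _ _ _ => Subtype.ext) ?_
  · intro 𝒜 h𝒜
    simpa [mem_powersetCard_univ, 𝒜.prop] using h𝒜
  · intro S hS
    simp only [mem_filter, mem_powersetCard_univ] at hS
    exact ⟨⟨S, hS.1⟩, mem_filter.2 ⟨mem_univ _, hS.2⟩, rfl⟩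

noncomputable def phase (M : ℕ) (η : ℝ) (a : Fin M) : ℂ :=
  Complex.exp (-(Complex.I * η * (a : ℕ)))

lemma norm_phase (M : ℕ) (η : ℝ) (a : Fin M) : ‖phase M η a‖ = 1 := by
  simp [phase, Complex.norm_exp]

lemma Feta_eq_inv_mul_sum_sub_expect {M A : ℕ} (hA : A ≠ 0) (η : ℝ) (𝒜 : Alphabet M A) :
    Feta M A η 𝒜 = (A : ℂ)⁻¹ * ∑ a ∈ 𝒜.val, (phase M η a - 𝔼 b, phase M η b) := by
  rw [Feta, sum_sub_distrib, sum_const, 𝒜.prop, Fintype.expect_eq_sum_div_card,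
    Fintype.card_fin, ← Fin.sum_univ_eq_sum_range (fun a => Complex.exp (-(Complex.I * η * a)))]
  simp only [phase, nsmul_eq_mul]
  field_simp

lemma map_Feta {M A : ℕ} (hA : A ≠ 0) (η : ℝ) (𝒜 : Alphabet M A) (L : ℂ →ₗ[ℝ] ℝ) :
    L (Feta M A η 𝒜) = (A : ℝ)⁻¹ * ∑ a ∈ 𝒜.val, (L (phase M η a) - 𝔼 b, L (phase M η b)) := by
  rw [Feta_eq_inv_mul_sum_sub_expect hA, show (A : ℂ)⁻¹ = ((A : ℝ)⁻¹ : ℝ) • (1 : ℂ) by simp,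
    smul_mul_assoc, one_mul, map_smul, map_sum, smul_eq_mul]
  simp only [map_sub, expect, map_nnrat_smul, map_sum]

lemma half_le_re_or_im_of_le_norm {z : ℂ} {t : ℝ} (h : t ≤ ‖z‖) :
    t / 2 ≤ z.re ∨ t / 2 ≤ -z.re ∨ t / 2 ≤ z.im ∨ t / 2 ≤ -z.im := by
  have := Complex.norm_le_abs_re_add_abs_im z
  rcases abs_cases z.re with h1 | h1 <;> rcases abs_cases z.im with h2 | h2
  all_goals
    by_contra! H
    linarith [H.1, H.2.1, H.2.2.1, H.2.2.2]

lemma le_two_mul_of_le_of_le_four_mul_sq {c C e : ℝ} (he : 0 ≤ e) (h1 : c ≤ C)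
    (h2 : c ≤ 4 * (C * e ^ 2)) : c ≤ 2 * e * C := by
  nlinarith

lemma card_filter_le_map_Feta {M A : ℕ} [NeZero M] (hA : A ≠ 0) (η : ℝ) (L : ℂ →ₗ[ℝ] ℝ)
    (hL : ∀ z, |L z| ≤ ‖z‖) {s : ℝ} (hs : 0 ≤ s) :
    #{𝒜 : Alphabet M A | s ≤ L (Feta M A η 𝒜)} ≤ M.choose A * Real.exp (-(A * s ^ 2 / 2)) := by
  have hf : ∀ a, L (phase M η a) ∈ Set.Icc (-1) 1 := fun a =>
    abs_le.1 ((hL _).trans (norm_phase M η a).le)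
  have hevent : ∀ 𝒜 : Alphabet M A, s ≤ L (Feta M A η 𝒜)
      ↔ A * s ≤ ∑ a ∈ 𝒜.val, (L (phase M η a) - 𝔼 b, L (phase M η b)) := fun 𝒜 => by
    rw [map_Feta hA, inv_mul_eq_div, le_div_iff₀ (by positivity), mul_comm]
  simp_rw [hevent]
  rw [card_filter_alphabet (fun S => A * s ≤ ∑ a ∈ S, (L (phase M η a) - 𝔼 b, L (phase M η b)))]
  refine (hoeffding_card_powersetCard hf (by norm_num) A hs).trans_eq ?_
  rw [Fintype.card_fin]
  ring_nf

lemma card_filter_le_norm_Feta {M A : ℕ} [NeZero M] (hA : A ≠ 0) (η : ℝ) {t : ℝ} (ht : 0 ≤ t) :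
    #{𝒜 : Alphabet M A | t ≤ ‖Feta M A η 𝒜‖} ≤ 4 * (M.choose A * Real.exp (-(A * t ^ 2 / 8))) := by
  have h (L : ℂ →ₗ[ℝ] ℝ) (hL : ∀ z, |L z| ≤ ‖z‖) :
      #{𝒜 : Alphabet M A | t / 2 ≤ L (Feta M A η 𝒜)} ≤ M.choose A * Real.exp (-(A * t ^ 2 / 8)) :=
    (card_filter_le_map_Feta hA η L hL (by positivity)).trans_eq (by ring_nf)
  have hre := h Complex.reLm Complex.abs_re_le_norm
  have hre' := h (-Complex.reLm) (by simpa using Complex.abs_re_le_norm)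
  have him := h Complex.imLm Complex.abs_im_le_norm
  have him' := h (-Complex.imLm) (by simpa using Complex.abs_im_le_norm)
  have hcard : #{𝒜 : Alphabet M A | t ≤ ‖Feta M A η 𝒜‖}
      ≤ #{𝒜 | t / 2 ≤ Complex.reLm (Feta M A η 𝒜)}
        + (#{𝒜 | t / 2 ≤ (-Complex.reLm) (Feta M A η 𝒜)}
        + (#{𝒜 | t / 2 ≤ Complex.imLm (Feta M A η 𝒜)}
        + #{𝒜 | t / 2 ≤ (-Complex.imLm) (Feta M A η 𝒜)})) := by
    refine le_trans ?_ <| (card_union_le _ _).trans <| add_le_add le_rfl <|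
      (card_union_le _ _).trans <| add_le_add le_rfl (card_union_le _ _)
    rw [← filter_or, ← filter_or, ← filter_or]
    exact card_le_card (monotone_filter_right _ fun _ _ => half_le_re_or_im_of_le_norm)
  have hcard' := (Nat.cast_le (α := ℝ)).2 hcard
  push_cast at hcard'
  linarith

theorem concentration_Feta_general (M A : ℕ) (hM : 3 ≤ M) (hA1 : 1 ≤ A)
    (η : ℝ) (t : ℝ) (ht : 0 < t) :
    uniformMeasure (Alphabet M A) {𝒜 : Alphabet M A | t ≤ ‖Feta M A η 𝒜‖}
      ≤ ENNReal.ofReal (2 * Real.exp (-(A * t ^ 2) / 16)) := by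
  have : NeZero M := ⟨by omega⟩
  have hcount := card_filter_le_norm_Feta (M := M) (by omega : A ≠ 0) η ht.le
  rw [uniformMeasure_apply, card_alphabet]
  refine ENNReal.div_le_of_le_mul ?_
  rw [← ENNReal.ofReal_natCast, ← ENNReal.ofReal_natCast, ← ENNReal.ofReal_mul (by positivity)]
  refine ENNReal.ofReal_le_ofReal (le_two_mul_of_le_of_le_four_mul_sq (Real.exp_pos _).le ?_ ?_)
  · rw [← card_alphabet, ← card_univ]
    exact_mod_cast card_le_card (filter_subset _ _)
  · refine hcount.trans_eq ?_
    rw [← Real.exp_nat_mul]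
    ring_nf

/-- **Concentration of `F_η`.**
For `η ≠ 0` and `t > 0`, `μ₁({𝒜 : |F_η(𝒜)| ≥ t}) ≤ 2 exp(-A t² / 16)`. -/
theorem concentration_Feta (M A : ℕ) (hM : 3 ≤ M) (hA1 : 1 ≤ A) (hAM : A ≤ M)
    (η : ℝ) (hη : η ≠ 0) (t : ℝ) (ht : 0 < t) :
    uniformMeasure (Alphabet M A) {𝒜 : Alphabet M A | t ≤ ‖Feta M A η 𝒜‖}
      ≤ ENNReal.ofReal (2 * Real.exp (-(A * t ^ 2) / 16)) :=
  concentration_Feta_general M A hM hA1 η t ht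

end FUPRandom
end

section
/- For every j ≥ 2, every realization of the construction, and every ξ ∈ ℝ ∖ {0}, with η := ξ/M^j one has the exact identity ℱν_j(ξ) − ℱν_{j−1}(ξ) = [ i (e^{−iη} − 1) / (√(2π) η) ] · ( (1/A^{j−1}) ∑_{b∈B_{j−1}} e^{−iM^j η b} F_η(𝒜(b)) ). -/
open MeasureTheory Finset Filter Topology

namespace FUPRandom

/-!
The intervals of `𝒞_j` start at distinct multiples of `M^{-j}`, so they overlap only in
endpoints and `ν_j = (A^{-j} ∑_{b ∈ B_j} δ_b) ∗ M^j 1_{[0, M^{-j}]}`. Hence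
`ℱν_j(ξ) = φ(ξ/M^j) · A^{-j} ∑_{b ∈ B_j} e^{-iξb}` with `φ = ℱ1_{[0,1]}`.
Writing each point of `B_j` as `b + a/M^j` with `b ∈ B_{j-1}`, `a ∈ 𝒜(b)`, and using the
geometric sum `φ(Mη) = φ(η) · M^{-1} ∑_{a<M} e^{-iηa}`, both transforms carry the factor
`φ(η)` and their difference is the `F_η` sum.
-/

open Complex

def cantorNumerator (M A : ℕ) (ω : Config M A) : (j : ℕ) → (Fin j → Fin A) → ℕ
  | 0, _ => 0
  | (j + 1), w =>
      M * cantorNumerator M A ω j (fun i => w i.castSucc)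
        + digit (ω j (finFunctionFinEquiv (fun i => w i.castSucc))) (w (Fin.last j))

/-- `ℱ1_{[0,1]}(t)` for `t ≠ 0`. -/
noncomputable def unitIntervalFourier (t : ℝ) : ℂ :=
  I * (exp (-(I * t)) - 1) / ((Real.sqrt (2 * Real.pi) * t : ℝ) : ℂ)

lemma aedisjoint_Icc_of_le {a b c d : ℝ} (h : b ≤ c) :
    AEDisjoint volume (Set.Icc a b) (Set.Icc c d) :=
  measure_mono_null (t := Set.Icc c b) (fun _ hx => ⟨hx.2.1, hx.1.2⟩)
    (by rw [Real.volume_Icc, ENNReal.ofReal_eq_zero, sub_nonpos]; exact h)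

lemma pairwise_aedisjoint_Icc_natCast_mul {ι : Type*} {f : ι → ℕ} (hf : Function.Injective f)
    {h : ℝ} (hh : 0 ≤ h) :
    Pairwise (Function.onFun (AEDisjoint volume)
      fun i => Set.Icc ((f i : ℝ) * h) (f i * h + h)) := by
  have hsep : ∀ i j, f i < f j → (f i : ℝ) * h + h ≤ f j * h := fun i j hij => by
    have : (f i : ℝ) + 1 ≤ f j := by exact_mod_cast hij
    nlinarith
  intro i j hij
  rcases (hf.ne hij).lt_or_gt with hlt | hlt
  · exact aedisjoint_Icc_of_le (hsep i j hlt)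
  · exact (aedisjoint_Icc_of_le (hsep j i hlt)).symm

lemma integral_Icc_exp_neg_I_mul {ξ : ℝ} (hξ : ξ ≠ 0) (c : ℝ) {h : ℝ} (hh : 0 ≤ h) :
    ∫ x in Set.Icc c (c + h), exp (-(I * x * ξ))
      = exp (-(I * c * ξ)) * (I * (exp (-(I * h * ξ)) - 1) / ξ) := by
  have hIξ : -(I * ξ) ≠ 0 := by simp [hξ]
  rw [integral_Icc_eq_integral_Ioc, ← intervalIntegral.integral_of_le (by linarith)]
  simp only [fun x : ℝ => show -(I * x * ξ) = -(I * ξ) * x by ring]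
  rw [integral_exp_mul_complex hIξ, ofReal_add, mul_add, exp_add]
  field_simp
  rw [I_sq]
  ring

lemma unitIntervalFourier_natCast_mul (m : ℕ) (t : ℝ) :
    unitIntervalFourier (m * t)
      = unitIntervalFourier t * ((m : ℂ)⁻¹ * ∑ a ∈ range m, exp (-(I * t * a))) := by
  have hpow : ∀ a : ℕ, exp (-(I * t * a)) = exp (-(I * t)) ^ a :=
    fun a => by rw [← exp_nat_mul]; ring_nf
  have hgeom : exp (-(I * ((m * t : ℝ) : ℂ))) - 1
      = (∑ a ∈ range m, exp (-(I * t * a))) * (exp (-(I * t)) - 1) := by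
    rw [Finset.sum_congr rfl fun a _ => hpow a, geom_sum_mul, ← hpow]
    push_cast
    ring_nf
  rw [unitIntervalFourier, unitIntervalFourier, hgeom]
  push_cast
  simp only [div_eq_mul_inv, mul_inv]
  ring

section Cantor

variable {M A : ℕ}

lemma digit_lt (𝒜 : Alphabet M A) (k : Fin A) : digit 𝒜 k < M :=
  (𝒜.val.orderIsoOfFin 𝒜.prop k : Fin M).isLt

lemma digit_injective (𝒜 : Alphabet M A) : Function.Injective (digit 𝒜) :=
  fun _ _ h => (𝒜.val.orderIsoOfFin 𝒜.prop).injective <|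
    Subtype.coe_injective (Fin.val_injective h)

lemma sum_comp_digit {β : Type*} [AddCommMonoid β] (𝒜 : Alphabet M A) (f : ℕ → β) :
    ∑ k : Fin A, f (digit 𝒜 k) = ∑ a ∈ 𝒜.val, f a := by
  rw [← Finset.sum_coe_sort 𝒜.val]
  exact Fintype.sum_equiv (𝒜.val.orderIsoOfFin 𝒜.prop).toEquiv _ _ fun _ => rfl

lemma cantorPoint_snoc (ω : Config M A) (k : ℕ) (w : Fin k → Fin A) (a : Fin A) :
    cantorPoint M A ω (k + 1) (Fin.snoc w a)
      = cantorPoint M A ω k w + digit (ω k (finFunctionFinEquiv w)) a / (M : ℝ) ^ (k + 1) := by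
  simp [cantorPoint]

lemma cantorPoint_eq_cantorNumerator_mul (hM : M ≠ 0) (ω : Config M A) (j : ℕ)
    (w : Fin j → Fin A) :
    cantorPoint M A ω j w = cantorNumerator M A ω j w * ((M : ℝ) ^ j)⁻¹ := by
  induction j with
  | zero => simp [cantorPoint, cantorNumerator]
  | succ j ih =>
    rw [cantorPoint, cantorNumerator, ih]
    push_cast
    field_simp
    ring

lemma cantorNumerator_injective (hM : M ≠ 0) (ω : Config M A) (j : ℕ) :
    Function.Injective (cantorNumerator M A ω j) := by
  induction j with
  | zero => exact fun _ _ _ => funext fun i => i.elim0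
  | succ j ih =>
    intro w w' h
    simp only [cantorNumerator] at h
    -- the last digit is `< M`, so dividing by `M` recovers the numerator of the prefix
    have hinit : (fun i : Fin j => w i.castSucc) = fun i => w' i.castSucc := by
      apply ih
      have := congrArg (· / M) h
      simpa [Nat.mul_add_div (Nat.pos_of_ne_zero hM), Nat.div_eq_of_lt (digit_lt _ _)] using this
    rw [hinit] at h
    have hlast : w (Fin.last j) = w' (Fin.last j) := digit_injective _ (Nat.add_left_cancel h)
    funext i
    induction i using Fin.lastCases with
    | last => exact hlast
    | cast i => exact congrFun hinit i

lemma integral_cantorIter (hM : M ≠ 0) (ω : Config M A) (n : ℕ) {f : ℝ → ℂ}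
    (hf : Continuous f) :
    ∫ x in cantorIter M A ω n, f x
      = ∑ w : Fin n → Fin A, ∫ x in Set.Icc (cantorPoint M A ω n w)
          (cantorPoint M A ω n w + ((M : ℝ) ^ n)⁻¹), f x := by
  rw [cantorIter, integral_iUnion_ae (fun _ => measurableSet_Icc.nullMeasurableSet), tsum_fintype]
  · simp only [cantorPoint_eq_cantorNumerator_mul hM]
    exact pairwise_aedisjoint_Icc_natCast_mul (cantorNumerator_injective hM ω n) (by positivity)
  · exact hf.continuousOn.integrableOn_compact (isCompact_iUnion fun _ => isCompact_Icc)

lemma fourierMeasure_cantorMeasureIter (hM : M ≠ 0) (ω : Config M A) (n : ℕ) {ξ : ℝ}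
    (hξ : ξ ≠ 0) :
    fourierMeasure (cantorMeasureIter M A ω n) ξ
      = unitIntervalFourier (ξ / (M : ℝ) ^ n)
          * (((A : ℂ) ^ n)⁻¹
            * ∑ w : Fin n → Fin A, exp (-(I * ξ * cantorPoint M A ω n w))) := by
  have hcomm : ∀ x : ℝ, exp (-(I * x * ξ)) = exp (-(I * ξ * x)) := fun x => by ring_nf
  rw [fourierMeasure, cantorMeasureIter, integral_smul_measure,
    integral_cantorIter hM ω n (by fun_prop)]
  simp only [integral_Icc_exp_neg_I_mul hξ _ (by positivity : (0 : ℝ) ≤ ((M : ℝ) ^ n)⁻¹)]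
  simp only [← Finset.sum_mul, hcomm, unitIntervalFourier, real_smul, ENNReal.toReal_div,
    ENNReal.toReal_pow, ENNReal.toReal_natCast]
  push_cast
  simp only [div_eq_mul_inv, mul_inv, inv_inv]
  ring_nf

lemma sum_exp_cantorPoint_succ (ω : Config M A) (k : ℕ) (ξ : ℝ) :
    ((A : ℂ) ^ (k + 1))⁻¹
        * ∑ w : Fin (k + 1) → Fin A, exp (-(I * ξ * cantorPoint M A ω (k + 1) w))
      = ((A : ℂ) ^ k)⁻¹ * ∑ w : Fin k → Fin A, exp (-(I * ξ * cantorPoint M A ω k w))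
          * ((A : ℂ)⁻¹ * ∑ a ∈ (ω k (finFunctionFinEquiv w)).val,
              exp (-(I * ((ξ / (M : ℝ) ^ (k + 1) : ℝ) : ℂ) * (a : ℕ)))) := by
  have hsplit : ∑ w : Fin (k + 1) → Fin A, exp (-(I * ξ * cantorPoint M A ω (k + 1) w))
      = ∑ w : Fin k → Fin A, ∑ a : Fin A,
          exp (-(I * ξ * cantorPoint M A ω (k + 1) (Fin.snoc w a))) := by
    rw [← Fintype.sum_prod_type']
    exact Fintype.sum_equiv ((Fin.snocEquiv fun _ => Fin A).symm.trans (Equiv.prodComm _ _))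
      _ _ fun w => by simp
  rw [hsplit, Finset.mul_sum, Finset.mul_sum]
  refine Finset.sum_congr rfl fun w _ => ?_
  rw [← sum_comp_digit (β := ℂ) (ω k (finFunctionFinEquiv w))
    fun d : ℕ => exp (-(I * ((ξ / (M : ℝ) ^ (k + 1) : ℝ) : ℂ) * d))]
  simp only [Finset.mul_sum]
  refine Finset.sum_congr rfl fun a _ => ?_
  have hexp : exp (-(I * ξ * cantorPoint M A ω (k + 1) (Fin.snoc w a)))
      = exp (-(I * ξ * cantorPoint M A ω k w))
          * exp (-(I * ((ξ / (M : ℝ) ^ (k + 1) : ℝ) : ℂ)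
              * (digit (ω k (finFunctionFinEquiv w)) a : ℕ))) := by
    rw [cantorPoint_snoc, ← exp_add]
    push_cast
    ring_nf
  rw [hexp, pow_succ, mul_inv]
  ring

end Cantor

theorem fourier_cantorMeasureIter_succ_sub_general (M A : ℕ) (hM : 3 ≤ M)
    (ω : Config M A) (j : ℕ) (hj : 2 ≤ j) (ξ : ℝ) (hξ : ξ ≠ 0) :
    fourierMeasure (cantorMeasureIter M A ω j) ξ
        - fourierMeasure (cantorMeasureIter M A ω (j - 1)) ξ
      = Complex.I * (Complex.exp (-(Complex.I * (ξ / (M : ℝ) ^ j))) - 1)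
          / ((Real.sqrt (2 * Real.pi) * (ξ / (M : ℝ) ^ j) : ℝ) : ℂ)
        * (((A : ℂ) ^ (j - 1))⁻¹ *
            ∑ w : Fin (j - 1) → Fin A,
              Complex.exp (-(Complex.I * ((M : ℝ) ^ j * (ξ / (M : ℝ) ^ j))
                  * cantorPoint M A ω (j - 1) w))
                * Feta M A (ξ / (M : ℝ) ^ j) (ω (j - 1) (finFunctionFinEquiv w))) := by
  obtain ⟨k, rfl⟩ : ∃ k, j = k + 1 := ⟨j - 1, by omega⟩
  have hM0 : M ≠ 0 := by omega
  have hscale : ξ / (M : ℝ) ^ k = M * (ξ / (M : ℝ) ^ (k + 1)) := by field_simp; ring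
  have hMξ : ((M : ℝ) : ℂ) ^ (k + 1) * ((ξ : ℂ) / ((M : ℝ) : ℂ) ^ (k + 1)) = ξ := by
    field_simp
  rw [Nat.add_sub_cancel, fourierMeasure_cantorMeasureIter hM0 ω (k + 1) hξ,
    fourierMeasure_cantorMeasureIter hM0 ω k hξ, sum_exp_cantorPoint_succ, hscale,
    unitIntervalFourier_natCast_mul, hMξ, ← Complex.ofReal_pow, ← Complex.ofReal_div,
    ← unitIntervalFourier]
  simp only [Feta, mul_sub, Finset.sum_sub_distrib, ← Finset.sum_mul]
  ring

/-- **Exact formula for consecutive differences of Fourier transforms.**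
For `j ≥ 2`, every realization, and `ξ ≠ 0`, with `η = ξ/M^j`:
`ℱν_j(ξ) - ℱν_{j-1}(ξ)
  = [i(e^{-iη} - 1)/(√(2π)η)] · (A^{-(j-1)} ∑_{b ∈ B_{j-1}} e^{-iM^jηb} F_η(𝒜(b)))`. -/
theorem fourier_cantorMeasureIter_succ_sub (M A : ℕ) (hM : 3 ≤ M) (hA1 : 1 ≤ A) (hAM : A ≤ M)
    (ω : Config M A) (j : ℕ) (hj : 2 ≤ j) (ξ : ℝ) (hξ : ξ ≠ 0) :
    fourierMeasure (cantorMeasureIter M A ω j) ξ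
        - fourierMeasure (cantorMeasureIter M A ω (j - 1)) ξ
      = Complex.I * (Complex.exp (-(Complex.I * (ξ / (M : ℝ) ^ j))) - 1)
          / ((Real.sqrt (2 * Real.pi) * (ξ / (M : ℝ) ^ j) : ℝ) : ℂ)
        * (((A : ℂ) ^ (j - 1))⁻¹ *
            ∑ w : Fin (j - 1) → Fin A,
              Complex.exp (-(Complex.I * ((M : ℝ) ^ j * (ξ / (M : ℝ) ^ j))
                  * cantorPoint M A ω (j - 1) w))
                * Feta M A (ξ / (M : ℝ) ^ j) (ω (j - 1) (finFunctionFinEquiv w))) :=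
  fourier_cantorMeasureIter_succ_sub_general M A hM ω j hj ξ hξ

end FUPRandom
end

section
/- Let 0 < δ < 1, 0 < ε < δ/2, M ≥ 3, and C₀ > 0. Let ν be a finite Borel measure supported in [0,1] such that ν(I) ≤ C₀|I|^δ for every interval I ⊆ ℝ and |ℱν(ξ)| ≤ C₀|ξ|^{−(δ−ε)/2} for all |ξ| ≥ M⁴. Then there is a constant C > 0, depending only on C₀, such that for all 0 < h ≤ M^{−8} the operator T : L²_ν(ℝ) → L²_ν(ℝ), Tu(ξ) = ∫_ℝ e^{−ixξ/h} u(x) dν(x), satisfies ‖T‖_{L²_ν(ℝ)→L²_ν(ℝ)} ≤ C h^{δ/4 − ε}. -/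
/-!
Expanding `‖Tu‖²` turns `T*T` into the integral operator with kernel
`K(x, y) = ∫ e^{-iξ(x-y)/h} dν(ξ) = √(2π) ℱν((x-y)/h)`, whose modulus is symmetric; by Schur's
test `‖T‖² ≤ sup_x ∫ |K(x, y)| dν(y)`. Split this row integral at `|x - y| = √h`. Near the
diagonal `|K| ≤ ν(ℝ) ≤ C₀` and the Frostman bound gives `ν(B(x, √h)) ≲ h^{δ/2}`. Away from it
`|(x - y)/h| ≥ h^{-1/2} ≥ M⁴`, so the Fourier decay gives `|K| ≲ h^β |x - y|^{-β}` with
`β = (δ - ε)/2`, and `∫ |x - y|^{-β} dν(y)` is bounded by the layer-cake formula since `2β < δ`.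
Both pieces are `O(h^{δ/2 - 2ε})`, whence `‖T‖ = O(h^{δ/4 - ε})`.
-/

open MeasureTheory Finset Filter Topology

open Set
open scoped ENNReal NNReal ComplexConjugate

theorem ENNReal.two_mul_le_add_sq (a b : ℝ≥0∞) : 2 * a * b ≤ a ^ 2 + b ^ 2 := by
  rcases eq_or_ne a ⊤ with rfl | ha
  · simp
  rcases eq_or_ne b ⊤ with rfl | hb
  · simp
  lift a to ℝ≥0 using ha
  lift b to ℝ≥0 using hb
  exact_mod_cast _root_.two_mul_le_add_sq a b

namespace MeasureTheory

variable {α : Type*} [MeasurableSpace α] {μ : Measure α}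

-- Schur's test, via `2 f(x) f(y) ≤ f(x)² + f(y)²`.
theorem lintegral_prod_mul_le_of_lintegral_le [SFinite μ] {k : α × α → ℝ≥0∞} {f : α → ℝ≥0∞}
    (hk : Measurable k) (hf : AEMeasurable f μ) {S : ℝ≥0∞}
    (hrow : ∀ x, ∫⁻ y, k (x, y) ∂μ ≤ S) (hcol : ∀ y, ∫⁻ x, k (x, y) ∂μ ≤ S) :
    ∫⁻ p, k p * (f p.1 * f p.2) ∂(μ.prod μ) ≤ S * ∫⁻ x, f x ^ 2 ∂μ := by
  have hrow' : ∫⁻ p, k p * f p.1 ^ 2 ∂(μ.prod μ) ≤ S * ∫⁻ x, f x ^ 2 ∂μ := by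
    rw [lintegral_prod (fun p ↦ k p * f p.1 ^ 2) (hk.aemeasurable.mul (hf.comp_fst.pow_const 2)),
      ← lintegral_const_mul'' _ (hf.pow_const 2)]
    refine lintegral_mono fun x ↦ ?_
    exact (lintegral_mul_const _ (hk.comp measurable_prodMk_left)).trans_le
      (mul_le_mul_left (hrow x) _)
  have hcol' : ∫⁻ p, k p * f p.2 ^ 2 ∂(μ.prod μ) ≤ S * ∫⁻ x, f x ^ 2 ∂μ := by
    rw [lintegral_prod_symm (fun p ↦ k p * f p.2 ^ 2)
        (hk.aemeasurable.mul (hf.comp_snd.pow_const 2)),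
      ← lintegral_const_mul'' _ (hf.pow_const 2)]
    refine lintegral_mono fun y ↦ ?_
    exact (lintegral_mul_const _ (hk.comp measurable_prodMk_right)).trans_le
      (mul_le_mul_left (hcol y) _)
  rw [← ENNReal.mul_le_mul_iff_right two_ne_zero ENNReal.ofNat_ne_top]
  calc 2 * ∫⁻ p, k p * (f p.1 * f p.2) ∂(μ.prod μ)
      = ∫⁻ p, k p * (2 * f p.1 * f p.2) ∂(μ.prod μ) := by
        rw [← lintegral_const_mul' _ _ ENNReal.ofNat_ne_top]
        congr with p; ring
    _ ≤ ∫⁻ p, k p * f p.1 ^ 2 + k p * f p.2 ^ 2 ∂(μ.prod μ) := by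
        gcongr with p
        rw [← mul_add]
        gcongr
        exact ENNReal.two_mul_le_add_sq _ _
    _ ≤ 2 * (S * ∫⁻ x, f x ^ 2 ∂μ) := by
        rw [lintegral_add_left' (f := fun p ↦ k p * f p.1 ^ 2)
          (hk.aemeasurable.mul (hf.comp_fst.pow_const 2)), two_mul]
        exact add_le_add hrow' hcol'

theorem eLpNorm_two_le_of_lintegral_sq_le {E F : Type*} [ENorm E] [ENorm F]
    {f : α → E} {g : α → F} {c : ℝ≥0∞}
    (h : ∫⁻ x, ‖f x‖ₑ ^ 2 ∂μ ≤ c ^ 2 * ∫⁻ x, ‖g x‖ₑ ^ 2 ∂μ) :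
    eLpNorm f 2 μ ≤ c * eLpNorm g 2 μ := by
  have hf := eLpNorm_nnreal_pow_eq_lintegral (f := f) (μ := μ) (p := 2) two_ne_zero
  have hg := eLpNorm_nnreal_pow_eq_lintegral (f := g) (μ := μ) (p := 2) two_ne_zero
  simp only [ENNReal.coe_ofNat, NNReal.coe_ofNat, ENNReal.rpow_two] at hf hg
  rw [← hf, ← hg, ← mul_pow] at h
  exact (ENNReal.pow_le_pow_left_iff two_ne_zero).1 h

end MeasureTheory

section Frostman

variable {ν : Measure ℝ} {C δ : ℝ}

theorem measure_closedBall_le_of_Icc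
    (hreg : ∀ a b : ℝ, a ≤ b → ν (Icc a b) ≤ ENNReal.ofReal (C * (b - a) ^ δ))
    (hC : 0 ≤ C) (hδ1 : δ ≤ 1) (x : ℝ) {s : ℝ} (hs : 0 ≤ s) :
    ν (Metric.closedBall x s) ≤ ENNReal.ofReal (2 * C * s ^ δ) := by
  rw [Real.closedBall_eq_Icc]
  refine (hreg _ _ (by linarith)).trans (ENNReal.ofReal_le_ofReal ?_)
  have h2δ : (2 : ℝ) ^ δ ≤ 2 := by
    simpa using Real.rpow_le_rpow_of_exponent_le one_le_two hδ1
  calc C * (x + s - (x - s)) ^ δ = 2 ^ δ * (C * s ^ δ) := by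
        rw [show x + s - (x - s) = 2 * s by ring, Real.mul_rpow zero_le_two hs]; ring
    _ ≤ 2 * (C * s ^ δ) := by gcongr
    _ = 2 * C * s ^ δ := by ring

theorem setOf_lt_rpow_neg_abs_sub_subset {β t : ℝ} (hβ : 0 < β) (ht : 0 < t) (x : ℝ) :
    {y | t < |x - y| ^ (-β)} ⊆ Metric.closedBall x (t ^ (-β)⁻¹) := by
  intro y (hy : t < |x - y| ^ (-β))
  have hxy : 0 < |x - y| := by
    refine (abs_nonneg _).lt_of_ne' fun h0 ↦ ?_
    rw [h0, Real.zero_rpow (neg_ne_zero.2 hβ.ne')] at hy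
    exact ht.not_gt hy
  rw [Metric.mem_closedBall, Real.dist_eq, abs_sub_comm]
  exact ((Real.lt_rpow_inv_iff_of_neg hxy ht (neg_neg_of_pos hβ)).2 hy).le

theorem measure_setOf_lt_rpow_neg_abs_sub_le
    (hreg : ∀ a b : ℝ, a ≤ b → ν (Icc a b) ≤ ENNReal.ofReal (C * (b - a) ^ δ))
    (hC : 0 ≤ C) (hδ1 : δ ≤ 1) {β t : ℝ} (hβ : 0 < β) (ht : 0 < t) (x : ℝ) :
    ν {y | t < |x - y| ^ (-β)} ≤ ENNReal.ofReal (2 * C * t ^ (-(δ / β))) := by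
  refine (measure_mono (setOf_lt_rpow_neg_abs_sub_subset hβ ht x)).trans ?_
  refine (measure_closedBall_le_of_Icc hreg hC hδ1 x (by positivity)).trans_eq ?_
  rw [← Real.rpow_mul ht.le]
  congr 3
  field_simp

theorem lintegral_rpow_neg_abs_sub_le
    (hreg : ∀ a b : ℝ, a ≤ b → ν (Icc a b) ≤ ENNReal.ofReal (C * (b - a) ^ δ))
    (hmass : ν univ ≤ ENNReal.ofReal C) (hC : 0 ≤ C) (hδ1 : δ ≤ 1)
    {β : ℝ} (hβ : 0 < β) (h2β : 2 * β ≤ δ) (x : ℝ) :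
    ∫⁻ y, ENNReal.ofReal (|x - y| ^ (-β)) ∂ν ≤ ENNReal.ofReal (3 * C) := by
  have hδβ : 2 ≤ δ / β := (le_div_iff₀ hβ).2 (by linarith)
  have hq : -(δ / β) < -1 := by linarith
  have hnear : ∫⁻ t in Ioc 0 1, ν {y | t < |x - y| ^ (-β)} ≤ ENNReal.ofReal C :=
    calc ∫⁻ t in Ioc 0 1, ν {y | t < |x - y| ^ (-β)}
        ≤ ∫⁻ _ in Ioc (0 : ℝ) 1, ENNReal.ofReal C :=
          lintegral_mono fun t ↦ (measure_mono (subset_univ _)).trans hmass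
      _ = ENNReal.ofReal C := by simp
  have hfar : ∫⁻ t in Ioi 1, ν {y | t < |x - y| ^ (-β)} ≤ ENNReal.ofReal (2 * C) :=
    calc ∫⁻ t in Ioi 1, ν {y | t < |x - y| ^ (-β)}
        ≤ ∫⁻ t in Ioi 1, ENNReal.ofReal (2 * C * t ^ (-(δ / β))) :=
          setLIntegral_mono' measurableSet_Ioi fun t ht ↦
            measure_setOf_lt_rpow_neg_abs_sub_le hreg hC hδ1 hβ (zero_lt_one.trans ht) x
      _ = ENNReal.ofReal (2 * C * (-1 / (-(δ / β) + 1))) := by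
          rw [← ofReal_integral_eq_lintegral_ofReal, integral_const_mul,
            integral_Ioi_rpow_of_lt hq one_pos, Real.one_rpow]
          · exact (integrableOn_Ioi_rpow_of_lt hq one_pos).const_mul _
          · filter_upwards [self_mem_ae_restrict measurableSet_Ioi] with t ht
            have : (0 : ℝ) < t := zero_lt_one.trans ht
            positivity
      _ ≤ ENNReal.ofReal (2 * C) := by
          refine ENNReal.ofReal_le_ofReal (mul_le_of_le_one_right (by positivity) ?_)
          rw [div_le_one_of_neg (by linarith)]
          linarith
  calc ∫⁻ y, ENNReal.ofReal (|x - y| ^ (-β)) ∂ν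
      = (∫⁻ t in Ioc 0 1, ν {y | t < |x - y| ^ (-β)})
          + ∫⁻ t in Ioi 1, ν {y | t < |x - y| ^ (-β)} := by
        rw [lintegral_eq_lintegral_meas_lt ν (.of_forall fun y ↦ by positivity) (by fun_prop),
          ← Ioc_union_Ioi_eq_Ioi zero_le_one,
          lintegral_union measurableSet_Ioi Ioc_disjoint_Ioi_same]
    _ ≤ ENNReal.ofReal C + ENNReal.ofReal (2 * C) := add_le_add hnear hfar
    _ = ENNReal.ofReal (3 * C) := by rw [← ENNReal.ofReal_add hC (by positivity)]; ring_nf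

end Frostman

theorem mul_le_sqrt_of_sq_mul_le_one {a h : ℝ} (ha : 0 ≤ a) (hh : 0 ≤ h)
    (hah : a ^ 2 * h ≤ 1) : a * h ≤ Real.sqrt h := by
  have hsq : a * Real.sqrt h ≤ 1 := by
    rw [← Real.sqrt_sq ha, ← Real.sqrt_mul (sq_nonneg a)]
    exact Real.sqrt_le_one.2 hah
  calc a * h = a * Real.sqrt h * Real.sqrt h := by rw [mul_assoc, Real.mul_self_sqrt hh]
    _ ≤ Real.sqrt h := mul_le_of_le_one_left (Real.sqrt_nonneg h) hsq

theorem sqrt_add_le_rpow {C δ ε h : ℝ} (hC : 0 ≤ C) (hε : 0 ≤ ε) (hh : 0 < h) (h1 : h ≤ 1) :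
    Real.sqrt (2 * C ^ 2 * Real.sqrt h ^ δ + 9 * C ^ 2 * h ^ ((δ - ε) / 2))
      ≤ 4 * C * h ^ (δ / 4 - ε) := by
  rw [Real.sqrt_le_left (by positivity), Real.sqrt_eq_rpow, ← Real.rpow_mul hh.le, mul_pow,
    ← Real.rpow_mul_natCast hh.le]
  have e1 : h ^ (1 / 2 * δ) ≤ h ^ ((δ / 4 - ε) * (2 : ℕ)) :=
    Real.rpow_le_rpow_of_exponent_ge hh h1 (by push_cast; linarith)
  have e2 : h ^ ((δ - ε) / 2) ≤ h ^ ((δ / 4 - ε) * (2 : ℕ)) :=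
    Real.rpow_le_rpow_of_exponent_ge hh h1 (by push_cast; linarith)
  have hC2 : 0 ≤ C ^ 2 := sq_nonneg C
  nlinarith [mul_le_mul_of_nonneg_left e1 hC2, mul_le_mul_of_nonneg_left e2 hC2,
    mul_nonneg hC2 (Real.rpow_nonneg hh.le ((δ / 4 - ε) * (2 : ℕ)))]

namespace FUPRandom

noncomputable def fourierOp (μ : Measure ℝ) (h : ℝ) (u : ℝ → ℂ) (ξ : ℝ) : ℂ :=
  ∫ x, Complex.exp (-(Complex.I * x * ξ / h)) * u x ∂μ

noncomputable def fourierKernel (ν : Measure ℝ) (h x y : ℝ) : ℂ :=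
  ∫ ξ, Complex.exp (-(Complex.I * ξ * ((x - y) / h : ℝ))) ∂ν

theorem fourierKernel_eq_fourierMeasure (ν : Measure ℝ) (h x y : ℝ) :
    fourierKernel ν h x y = Real.sqrt (2 * Real.pi) * fourierMeasure ν ((x - y) / h) := by
  have : (Real.sqrt (2 * Real.pi) : ℂ) ≠ 0 := by
    exact_mod_cast (Real.sqrt_pos.2 Real.two_pi_pos).ne'
  rw [fourierMeasure, mul_inv_cancel_left₀ this, fourierKernel]

theorem enorm_fourierKernel_le (ν : Measure ℝ) (h x y : ℝ) :
    ‖fourierKernel ν h x y‖ₑ ≤ ν Set.univ :=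
  (enorm_integral_le_lintegral_enorm _).trans_eq (by simp [← ofReal_norm, Complex.norm_exp])

theorem conj_fourierKernel (ν : Measure ℝ) (h x y : ℝ) :
    conj (fourierKernel ν h x y) = fourierKernel ν h y x := by
  rw [fourierKernel, fourierKernel, ← integral_conj]
  congr with ξ
  rw [← Complex.exp_conj]
  congr 1
  simp only [map_neg, map_mul, Complex.conj_I, Complex.conj_ofReal]
  push_cast
  ring

theorem enorm_fourierKernel_comm (ν : Measure ℝ) (h x y : ℝ) :
    ‖fourierKernel ν h x y‖ₑ = ‖fourierKernel ν h y x‖ₑ := by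
  rw [← conj_fourierKernel, RCLike.enorm_conj]

theorem measurable_fourierKernel (ν : Measure ℝ) [SFinite ν] (h : ℝ) :
    Measurable fun p : ℝ × ℝ ↦ fourierKernel ν h p.1 p.2 := by
  have : Continuous fun q : (ℝ × ℝ) × ℝ ↦
      Complex.exp (-(Complex.I * q.2 * ((q.1.1 - q.1.2) / h : ℝ))) := by fun_prop
  exact this.stronglyMeasurable.integral_prod_right'.measurable

theorem norm_fourierOp_le (μ : Measure ℝ) (h : ℝ) (u : ℝ → ℂ) (ξ : ℝ) :
    ‖fourierOp μ h u ξ‖ ≤ ∫ x, ‖u x‖ ∂μ :=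
  (norm_integral_le_integral_norm _).trans_eq (by simp [Complex.norm_exp])

theorem aestronglyMeasurable_fourierOp {μ : Measure ℝ} [SFinite μ] (ν : Measure ℝ) (h : ℝ)
    {u : ℝ → ℂ} (hu : AEStronglyMeasurable u μ) :
    AEStronglyMeasurable (fourierOp μ h u) ν := by
  have : Continuous fun q : ℝ × ℝ ↦ Complex.exp (-(Complex.I * q.2 * q.1 / h)) := by fun_prop
  exact (this.aestronglyMeasurable.mul hu.comp_snd).integral_prod_right'

theorem integral_fourierOp_mul_conj {μ ν : Measure ℝ} [SFinite μ] [IsFiniteMeasure ν]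
    (h : ℝ) {u : ℝ → ℂ} (hu : Integrable u μ) :
    ∫ ξ, fourierOp μ h u ξ * conj (fourierOp μ h u ξ) ∂ν
      = ∫ p, u p.1 * conj (u p.2) * fourierKernel ν h p.1 p.2 ∂(μ.prod μ) := by
  set e : ℝ → ℝ → ℂ := fun x ξ ↦ Complex.exp (-(Complex.I * x * ξ / h))
  have phase : ∀ x y ξ : ℝ,
      e x ξ * conj (e y ξ) = Complex.exp (-(Complex.I * ξ * ((x - y) / h : ℝ))) := by
    intro x y ξ
    rw [← Complex.exp_conj, ← Complex.exp_add]
    congr 1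
    simp only [map_neg, map_div₀, map_mul, Complex.conj_I, Complex.conj_ofReal]
    push_cast
    ring
  have hint : Integrable (Function.uncurry fun (ξ : ℝ) (p : ℝ × ℝ) ↦
      e p.1 ξ * u p.1 * conj (e p.2 ξ * u p.2)) (ν.prod (μ.prod μ)) := by
    have he : Continuous fun q : ℝ × ℝ ↦ e q.1 q.2 := by fun_prop
    have hbound : ∀ q : ℝ × ℝ × ℝ, ‖e q.2.1 q.1 * u q.2.1 * conj (e q.2.2 q.1 * u q.2.2)‖
        ≤ 1 * (‖u q.2.1‖ * ‖u q.2.2‖) := fun q ↦ by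
      simp [e, Complex.norm_exp]
    refine Integrable.mono' ((integrable_const (1 : ℝ)).mul_prod (hu.norm.mul_prod hu.norm))
      ?_ (.of_forall hbound)
    exact ((he.comp (continuous_snd.fst.prodMk continuous_fst)).aestronglyMeasurable.mul
      hu.1.comp_fst.comp_snd).mul
      (((he.comp (continuous_snd.snd.prodMk continuous_fst)).aestronglyMeasurable.mul
      hu.1.comp_snd.comp_snd).star)
  calc ∫ ξ, fourierOp μ h u ξ * conj (fourierOp μ h u ξ) ∂ν
      = ∫ ξ, ∫ p, e p.1 ξ * u p.1 * conj (e p.2 ξ * u p.2) ∂(μ.prod μ) ∂ν := by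
        congr with ξ
        rw [fourierOp, ← integral_conj, ← integral_prod_mul]
    _ = ∫ p, ∫ ξ, e p.1 ξ * u p.1 * conj (e p.2 ξ * u p.2) ∂ν ∂(μ.prod μ) :=
        integral_integral_swap hint
    _ = ∫ p, u p.1 * conj (u p.2) * fourierKernel ν h p.1 p.2 ∂(μ.prod μ) := by
        congr with p
        rw [fourierKernel, ← integral_const_mul]
        congr with ξ
        rw [← phase, map_mul]
        ring

theorem lintegral_enorm_fourierOp_sq_le {μ ν : Measure ℝ} [SFinite μ] [IsFiniteMeasure ν]
    (h : ℝ) {u : ℝ → ℂ} (hu : Integrable u μ) :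
    ∫⁻ ξ, ‖fourierOp μ h u ξ‖ₑ ^ 2 ∂ν
      ≤ ∫⁻ p, ‖fourierKernel ν h p.1 p.2‖ₑ * (‖u p.1‖ₑ * ‖u p.2‖ₑ) ∂(μ.prod μ) := by
  set T := fourierOp μ h u
  have hT : Integrable (fun ξ ↦ ‖T ξ‖ ^ 2) ν :=
    Integrable.of_bound ((aestronglyMeasurable_fourierOp ν h hu.1).norm.pow 2)
      ((∫ x, ‖u x‖ ∂μ) ^ 2) (.of_forall fun ξ ↦ by
        simpa using pow_le_pow_left₀ (norm_nonneg _) (norm_fourierOp_le μ h u ξ) 2)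
  calc ∫⁻ ξ, ‖T ξ‖ₑ ^ 2 ∂ν
      = ENNReal.ofReal (∫ ξ, ‖T ξ‖ ^ 2 ∂ν) := by
        rw [ofReal_integral_eq_lintegral_ofReal hT (.of_forall fun ξ ↦ by positivity)]
        simp [← ofReal_norm, ENNReal.ofReal_pow]
    _ = ‖∫ ξ, T ξ * conj (T ξ) ∂ν‖ₑ := by
        simp_rw [Complex.mul_conj, Complex.normSq_eq_norm_sq]
        rw [integral_complex_ofReal, ← ofReal_norm, Complex.norm_real,
          Real.norm_of_nonneg (by positivity)]
    _ = ‖∫ p, u p.1 * conj (u p.2) * fourierKernel ν h p.1 p.2 ∂(μ.prod μ)‖ₑ := by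
        rw [integral_fourierOp_mul_conj h hu]
    _ ≤ ∫⁻ p, ‖u p.1 * conj (u p.2) * fourierKernel ν h p.1 p.2‖ₑ ∂(μ.prod μ) :=
        enorm_integral_le_lintegral_enorm _
    _ = ∫⁻ p, ‖fourierKernel ν h p.1 p.2‖ₑ * (‖u p.1‖ₑ * ‖u p.2‖ₑ) ∂(μ.prod μ) := by
        congr with p
        rw [enorm_mul, enorm_mul, RCLike.enorm_conj]
        ring

theorem norm_fourierKernel_le_of_decay {ν : Measure ℝ} {C β R h x y : ℝ}
    (hdecay : ∀ ξ : ℝ, R ≤ |ξ| → ‖fourierMeasure ν ξ‖ ≤ C * |ξ| ^ (-β))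
    (hh : 0 < h) (hxy : R * h ≤ |x - y|) :
    ‖fourierKernel ν h x y‖ ≤ 3 * C * h ^ β * |x - y| ^ (-β) := by
  have hξ : R ≤ |(x - y) / h| := by
    rwa [abs_div, abs_of_pos hh, le_div_iff₀ hh]
  have hdec := hdecay _ hξ
  have hsqrt : Real.sqrt (2 * Real.pi) ≤ 3 := by
    rw [Real.sqrt_le_left (by norm_num)]
    nlinarith [Real.pi_lt_four]
  calc ‖fourierKernel ν h x y‖
      = Real.sqrt (2 * Real.pi) * ‖fourierMeasure ν ((x - y) / h)‖ := by
        rw [fourierKernel_eq_fourierMeasure, norm_mul, Complex.norm_real,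
          Real.norm_of_nonneg (Real.sqrt_nonneg _)]
    _ ≤ 3 * (C * |(x - y) / h| ^ (-β)) :=
        mul_le_mul hsqrt hdec (norm_nonneg _) zero_le_three
    _ = 3 * C * h ^ β * |x - y| ^ (-β) := by
        rw [abs_div, abs_of_pos hh, Real.div_rpow (abs_nonneg _) hh.le, Real.rpow_neg hh.le,
          div_inv_eq_mul]
        ring

theorem lintegral_enorm_fourierKernel_le {ν : Measure ℝ} {C δ β R h r : ℝ} (hC : 0 ≤ C)
    (hδ1 : δ ≤ 1) (hβ : 0 < β) (h2β : 2 * β ≤ δ) (hmass : ν univ ≤ ENNReal.ofReal C)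
    (hreg : ∀ a b : ℝ, a ≤ b → ν (Icc a b) ≤ ENNReal.ofReal (C * (b - a) ^ δ))
    (hdecay : ∀ ξ : ℝ, R ≤ |ξ| → ‖fourierMeasure ν ξ‖ ≤ C * |ξ| ^ (-β))
    (hh : 0 < h) (hr : 0 ≤ r) (hRr : R * h ≤ r) (x : ℝ) :
    ∫⁻ y, ‖fourierKernel ν h x y‖ₑ ∂ν ≤ ENNReal.ofReal (2 * C ^ 2 * r ^ δ + 9 * C ^ 2 * h ^ β) := by
  have hnear : ∫⁻ y in Metric.closedBall x r, ‖fourierKernel ν h x y‖ₑ ∂ν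
      ≤ ENNReal.ofReal (2 * C ^ 2 * r ^ δ) :=
    calc ∫⁻ y in Metric.closedBall x r, ‖fourierKernel ν h x y‖ₑ ∂ν
        ≤ ∫⁻ _ in Metric.closedBall x r, ENNReal.ofReal C ∂ν :=
          lintegral_mono fun y ↦ (enorm_fourierKernel_le ν h x y).trans hmass
      _ = ENNReal.ofReal C * ν (Metric.closedBall x r) := setLIntegral_const _ _
      _ ≤ ENNReal.ofReal C * ENNReal.ofReal (2 * C * r ^ δ) :=
          mul_le_mul' le_rfl (measure_closedBall_le_of_Icc hreg hC hδ1 x hr)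
      _ = ENNReal.ofReal (2 * C ^ 2 * r ^ δ) := by
          rw [← ENNReal.ofReal_mul hC]; ring_nf
  have hfar : ∫⁻ y in (Metric.closedBall x r)ᶜ, ‖fourierKernel ν h x y‖ₑ ∂ν
      ≤ ENNReal.ofReal (9 * C ^ 2 * h ^ β) :=
    calc ∫⁻ y in (Metric.closedBall x r)ᶜ, ‖fourierKernel ν h x y‖ₑ ∂ν
        ≤ ∫⁻ y, ENNReal.ofReal (3 * C * h ^ β) * ENNReal.ofReal (|x - y| ^ (-β)) ∂ν := by
          refine (setLIntegral_mono' measurableSet_closedBall.compl fun y hy ↦ ?_).trans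
            (setLIntegral_le_lintegral _ _)
          have hxy : r < |x - y| := by
            simpa [Real.dist_eq, abs_sub_comm] using hy
          rw [← ENNReal.ofReal_mul (by positivity), ← ofReal_norm]
          exact ENNReal.ofReal_le_ofReal
            (norm_fourierKernel_le_of_decay hdecay hh (hRr.trans hxy.le))
      _ = ENNReal.ofReal (3 * C * h ^ β) * ∫⁻ y, ENNReal.ofReal (|x - y| ^ (-β)) ∂ν :=
          lintegral_const_mul' _ _ ENNReal.ofReal_ne_top
      _ ≤ ENNReal.ofReal (3 * C * h ^ β) * ENNReal.ofReal (3 * C) :=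
          mul_le_mul' le_rfl (lintegral_rpow_neg_abs_sub_le hreg hmass hC hδ1 hβ h2β x)
      _ = ENNReal.ofReal (9 * C ^ 2 * h ^ β) := by
          rw [← ENNReal.ofReal_mul (by positivity)]; ring_nf
  calc ∫⁻ y, ‖fourierKernel ν h x y‖ₑ ∂ν
      = (∫⁻ y in Metric.closedBall x r, ‖fourierKernel ν h x y‖ₑ ∂ν)
          + ∫⁻ y in (Metric.closedBall x r)ᶜ, ‖fourierKernel ν h x y‖ₑ ∂ν :=
        (lintegral_add_compl _ measurableSet_closedBall).symm
    _ ≤ ENNReal.ofReal (2 * C ^ 2 * r ^ δ) + ENNReal.ofReal (9 * C ^ 2 * h ^ β) :=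
        add_le_add hnear hfar
    _ = ENNReal.ofReal (2 * C ^ 2 * r ^ δ + 9 * C ^ 2 * h ^ β) :=
        (ENNReal.ofReal_add (by positivity) (by positivity)).symm

theorem eLpNorm_fourierOp_le {ν : Measure ℝ} [IsFiniteMeasure ν] {h S : ℝ}
    (hrow : ∀ x, ∫⁻ y, ‖fourierKernel ν h x y‖ₑ ∂ν ≤ ENNReal.ofReal S)
    {u : ℝ → ℂ} (hu : MemLp u 2 ν) :
    eLpNorm (fourierOp ν h u) 2 ν ≤ ENNReal.ofReal (Real.sqrt S) * eLpNorm u 2 ν := by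
  have hcol : ∀ y, ∫⁻ x, ‖fourierKernel ν h x y‖ₑ ∂ν ≤ ENNReal.ofReal S := fun y ↦ by
    simpa only [enorm_fourierKernel_comm] using hrow y
  refine eLpNorm_two_le_of_lintegral_sq_le ?_
  calc ∫⁻ ξ, ‖fourierOp ν h u ξ‖ₑ ^ 2 ∂ν
      ≤ ∫⁻ p, ‖fourierKernel ν h p.1 p.2‖ₑ * (‖u p.1‖ₑ * ‖u p.2‖ₑ) ∂(ν.prod ν) :=
        lintegral_enorm_fourierOp_sq_le h (hu.integrable one_le_two)
    _ ≤ ENNReal.ofReal S * ∫⁻ x, ‖u x‖ₑ ^ 2 ∂ν :=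
        lintegral_prod_mul_le_of_lintegral_le (measurable_fourierKernel ν h).enorm
          hu.1.enorm hrow hcol
    _ = ENNReal.ofReal (Real.sqrt S) ^ 2 * ∫⁻ x, ‖u x‖ₑ ^ 2 ∂ν := by
        rw [← ENNReal.ofReal_pow (Real.sqrt_nonneg S), Real.sq_sqrt', ENNReal.ofReal_max,
          ENNReal.ofReal_zero, max_eq_left (by positivity)]

/-- **From Fourier decay to the FUP for measures.**
Let `0 < δ < 1`, `0 < ε < δ/2`, `M ≥ 3`, `C₀ > 0`. If `ν` is a finite Borel
measure supported in `[0,1]` with `ν(I) ≤ C₀|I|^δ` for every interval `I` and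
`|ℱν(ξ)| ≤ C₀|ξ|^{-(δ-ε)/2}` for `|ξ| ≥ M⁴`, then there is `C > 0` depending
only on `C₀` such that for all `0 < h ≤ M^{-8}` the operator
`Tu(ξ) = ∫ e^{-ixξ/h} u(x) dν(x)` satisfies `‖T‖_{L²_ν → L²_ν} ≤ C h^{δ/4-ε}`. -/
theorem fup_from_fourier_decay :
    ∀ C₀ : ℝ, 0 < C₀ →
      ∃ C : ℝ, 0 < C ∧
        ∀ (δ ε : ℝ) (M : ℕ), 0 < δ → δ < 1 → 0 < ε → ε < δ / 2 → 3 ≤ M →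
          ∀ ν : Measure ℝ, IsFiniteMeasure ν →
            ν (Set.Icc (0 : ℝ) 1)ᶜ = 0 →
            (∀ a b : ℝ, a ≤ b →
              ν (Set.Icc a b) ≤ ENNReal.ofReal (C₀ * (b - a) ^ δ)) →
            (∀ ξ : ℝ, (M : ℝ) ^ 4 ≤ |ξ| →
              ‖fourierMeasure ν ξ‖ ≤ C₀ * |ξ| ^ (-(δ - ε) / 2)) →
            ∀ h : ℝ, 0 < h → h ≤ (M : ℝ) ^ (-8 : ℤ) →
              ∀ u : ℝ → ℂ, MemLp u 2 ν →
                eLpNorm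
                    (fun ξ : ℝ => ∫ x, Complex.exp (-(Complex.I * x * ξ / h)) * u x ∂ν) 2 ν
                  ≤ ENNReal.ofReal (C * h ^ (δ / 4 - ε)) * eLpNorm u 2 ν := by
  intro C₀ hC₀
  refine ⟨4 * C₀, by positivity, ?_⟩
  intro δ ε M hδ hδ1 hε hεδ hM ν hfin hsupp hreg hdecay h hh hhM u hu
  have hM8 : ((M : ℝ) ^ 4) ^ 2 * h ≤ 1 := by
    have hM0 : (0 : ℝ) < (M : ℝ) ^ 8 := by positivity
    rw [zpow_neg, zpow_ofNat] at hhM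
    rw [← pow_mul, ← mul_inv_cancel₀ hM0.ne']
    exact mul_le_mul_of_nonneg_left hhM hM0.le
  have h1 : h ≤ 1 := (le_mul_of_one_le_left hh.le
    (one_le_pow₀ (one_le_pow₀ (by exact_mod_cast (by omega : 1 ≤ M))))).trans hM8
  have hmass : ν univ ≤ ENNReal.ofReal C₀ := by
    rw [← measure_add_measure_compl (measurableSet_Icc (a := (0 : ℝ)) (b := 1)), hsupp, add_zero]
    simpa using hreg 0 1 zero_le_one
  have hrow := lintegral_enorm_fourierKernel_le (β := (δ - ε) / 2) hC₀.le hδ1.le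
    (by linarith) (by linarith) hmass hreg (fun ξ hξ ↦ (hdecay ξ hξ).trans_eq (by rw [neg_div]))
    hh (Real.sqrt_nonneg h) (mul_le_sqrt_of_sq_mul_le_one (by positivity) hh.le hM8)
  exact (eLpNorm_fourierOp_le hrow hu).trans
    (mul_le_mul' (ENNReal.ofReal_le_ofReal (sqrt_add_le_rpow hC₀.le hε.le hh h1)) le_rfl)

end FUPRandom
end
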